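/- arXiv:nlin/0105051 — 6 statements merged into one kernel-verified Lean document; each statement's English description precedes it below -/
import Mathlib

section
/- Let X be an n×n upper Hessenberg matrix (with all subdiagonal entries equal to 1), and let polynomials p_0 = 1, p_1, ..., p_{n-1} be defined by the recursion p_i(λ) = λ p_{i-1}(λ) − Σ_{α=1}^{i} x_{α i} p_{α−1}(λ) for i = 1,...,n−1. Then p_i(X) e_1 = e_{i+1} for i = 0,...,n−1, where e_j denotes the j-th standard basis vector. -/
/-- For an upper Hessenberg matrix `X` with unit subdiagonal, the monic
polynomials defined by the truncated eigenvalue recursion satisfy `p i (X) e₁ = e_{i+1}`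
(0-based: `p i (X) e₀ = e_i`). -/
theorem hessenberg_poly_basis {F : Type*} [Field F] {n : ℕ} [NeZero n]
    (X : Matrix (Fin n) (Fin n) F)
    (hsub : ∀ i j : Fin n, (i : ℕ) = (j : ℕ) + 1 → X i j = 1)
    (hlow : ∀ i j : Fin n, (j : ℕ) + 1 < (i : ℕ) → X i j = 0)
    (p : ℕ → Polynomial F)
    (hp0 : p 0 = 1)
    (hrec : ∀ i : ℕ, 1 ≤ i → ∀ hin : i < n,
      p i = Polynomial.X * p (i - 1) -
        ∑ α : Fin i, Polynomial.C (X ⟨α, lt_trans α.isLt hin⟩ ⟨i - 1, by omega⟩) * p α) :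
    ∀ i : Fin n,
      (Polynomial.aeval X (p i)).mulVec (Pi.single (0 : Fin n) 1) = Pi.single i 1 := by
  suffices H : ∀ k, ∀ h : k < n,
      (Polynomial.aeval X (p k)).mulVec (Pi.single (0 : Fin n) 1) = Pi.single ⟨k, h⟩ 1 by
    intro i
    simpa using H i i.isLt
  intro k
  induction k using Nat.strong_induction_on with
  | _ k ih =>
    intro h
    match k with
    | 0 =>
      have h0 : (⟨0, h⟩ : Fin n) = 0 := rfl
      rw [hp0, map_one, Matrix.one_mulVec, h0]
    | k + 1 =>
      have hk : k < n := by omega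
      rw [hrec (k + 1) (by omega) h]
      have hsumv : ∀ (f : Fin (k + 1) → Matrix (Fin n) (Fin n) F) (v : Fin n → F),
          (∑ α, f α).mulVec v = ∑ α, (f α).mulVec v := by
        intro f v
        funext j
        simp only [Matrix.mulVec, dotProduct, Finset.sum_apply, Matrix.sum_apply,
          Finset.sum_mul]
        rw [Finset.sum_comm]
      simp only [Nat.add_sub_cancel, map_sub, map_mul, Polynomial.aeval_X, map_sum,
        Polynomial.aeval_C, Matrix.sub_mulVec, ← Algebra.smul_def,
        Matrix.smul_mulVec, hsumv]
      rw [← Matrix.mulVec_mulVec, ih k (by omega) hk]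
      have hα : ∀ α : Fin (k + 1), (Polynomial.aeval X (p α)).mulVec (Pi.single (0 : Fin n) 1)
          = Pi.single (⟨α, by omega⟩ : Fin n) 1 := fun α => ih α (by omega) (by omega)
      funext j
      simp only [Pi.sub_apply, Finset.sum_apply, Pi.smul_apply, hα,
        Matrix.mulVec_single_one, Matrix.col_apply, mul_one, smul_eq_mul, Pi.single_apply]
      rcases lt_trichotomy (j : ℕ) (k + 1) with hj | hj | hj
      · -- j ≤ k : the term α = j cancels
        have hrhs : j ≠ (⟨k + 1, h⟩ : Fin n) := by
          intro e; have := congrArg Fin.val e; simp at this; omega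
        rw [if_neg hrhs, Finset.sum_eq_single (⟨(j : ℕ), hj⟩ : Fin (k + 1))]
        · rw [if_pos (Fin.ext rfl : j = ⟨((⟨(j : ℕ), hj⟩ : Fin (k + 1)) : ℕ), by omega⟩)]
          simp [Fin.eta]
        · intro b _ hb
          rw [if_neg, mul_zero]
          intro e
          exact hb (by
            apply Fin.ext
            simp only [Fin.val_mk]
            have := congrArg Fin.val e; simp at this; omega)
        · simp
      · -- j = k + 1
        have h1 : X j ⟨k, hk⟩ = 1 := hsub j ⟨k, hk⟩ (by simpa using hj)
        have hrhs : j = (⟨k + 1, h⟩ : Fin n) := Fin.ext (by simp [hj])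
        rw [h1, if_pos hrhs, Finset.sum_eq_zero, sub_zero]
        intro b _
        rw [if_neg, mul_zero]
        intro e
        have := congrArg Fin.val e; simp at this; omega
      · -- j > k + 1
        have h0 : X j ⟨k, hk⟩ = 0 := hlow j ⟨k, hk⟩ (by simp; omega)
        have hrhs : j ≠ (⟨k + 1, h⟩ : Fin n) := by
          intro e; have := congrArg Fin.val e; simp at this; omega
        rw [h0, if_neg hrhs, Finset.sum_eq_zero, zero_sub, neg_zero]
        intro b _
        rw [if_neg, mul_zero]
        intro e
        have := congrArg Fin.val e; simp at this; omega
end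

section
/- Let X be an invertible n×n matrix with moments s_j = e_1^T X^j e_1 for j ∈ ℤ. Fix integers l, m and 0 ≤ i < n, and let R(λ) = λ^m · P_i^{(l)}(λ), where P_i^{(l)}(λ) is the determinant of the (i+1)×(i+1) matrix whose first i rows are (s_{l−α+1}, s_{l−α+2}, ..., s_{l−α+1+i}) for α = 1,...,i and whose last row is (1, λ, ..., λ^i). Then e_1^T R(X) X^α e_1 = 0 for all α with l+1−m−i ≤ α ≤ l−m. -/
/-- orthogonality relations for the Laurent polynomial
`R(λ) = λ^m 𝒫_i^{(l)}(λ)` built from the moments of an invertible matrix `X`: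
`e₁ᵀ R(X) X^α e₁ = 0` for `l+1−m−i ≤ α ≤ l−m`. -/
theorem moment_laurent_orthogonality {F : Type*} [Field F] {n : ℕ} [NeZero n]
    (X : Matrix (Fin n) (Fin n) F) (hX : IsUnit X)
    (s : ℤ → F)
    (hs : ∀ j : ℤ, s j =
      ((hX.unit ^ j : (Matrix (Fin n) (Fin n) F)ˣ) : Matrix (Fin n) (Fin n) F) 0 0)
    (l m : ℤ) (i : ℕ) (hi : i < n)
    (P : Polynomial F)
    (hP : P = Matrix.det (Matrix.of fun a b : Fin (i + 1) =>
      if (a : ℕ) < i then Polynomial.C (s (l - ((a : ℕ) : ℤ) + ((b : ℕ) : ℤ)))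
      else Polynomial.X ^ (b : ℕ))) :
    ∀ α : ℤ, l + 1 - m - (i : ℤ) ≤ α → α ≤ l - m →
      (((hX.unit ^ m : (Matrix (Fin n) (Fin n) F)ˣ) : Matrix (Fin n) (Fin n) F) *
        Polynomial.aeval X P *
        ((hX.unit ^ α : (Matrix (Fin n) (Fin n) F)ˣ) : Matrix (Fin n) (Fin n) F)) 0 0
        = 0 := by
  intro α h1 h2
  have hi1 : 1 ≤ i := by omega
  set A : Matrix (Fin (i+1)) (Fin (i+1)) F :=
    Matrix.of (fun a b : Fin (i+1) =>
      if (a : ℕ) < i then s (l - ((a : ℕ) : ℤ) + ((b : ℕ) : ℤ)) else s (m + α + ((b : ℕ) : ℤ)))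
    with hAdef
  have a0lt : (l - m - α).toNat < i + 1 := by omega
  set a0 : Fin (i+1) := ⟨(l - m - α).toNat, a0lt⟩ with ha0
  have ha0i : (a0 : ℕ) < i := by simp only [ha0]; omega
  have hAdet : A.det = 0 := by
    apply Matrix.det_zero_of_row_eq (i := a0) (j := Fin.last i)
    · refine Fin.ne_of_lt ?_
      simpa [Fin.lt_def, Fin.val_last] using ha0i
    · funext b
      simp only [hAdef, Matrix.of_apply, ha0i, if_pos, Fin.val_last, lt_irrefl, if_neg,
        not_lt, le_refl]
      congr 1
      have : ((l - m - α).toNat : ℤ) = l - m - α := Int.toNat_of_nonneg (by omega)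
      rw [this]; ring
  -- key moment computation
  have hpow : ∀ b : ℕ,
      (((hX.unit ^ m : (Matrix (Fin n) (Fin n) F)ˣ) : Matrix (Fin n) (Fin n) F) * X ^ b *
        ((hX.unit ^ α : (Matrix (Fin n) (Fin n) F)ˣ) : Matrix (Fin n) (Fin n) F)) 0 0
        = s (m + α + (b : ℤ)) := by
    intro b
    rw [hs]
    congr 1
    have hXb : X ^ b = ((hX.unit ^ ((b : ℕ) : ℤ) : (Matrix (Fin n) (Fin n) F)ˣ) :
        Matrix (Fin n) (Fin n) F) := by
      rw [zpow_natCast, Units.val_pow_eq_pow_val, hX.unit_spec]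
    rw [hXb, ← Units.val_mul, ← Units.val_mul, ← zpow_add, ← zpow_add]
    congr 1
    ring
  -- expansion of P along the last row
  have hPexp : P = ∑ j : Fin (i+1), (-1) ^ (i + (j : ℕ)) * Polynomial.X ^ (j : ℕ) *
      Polynomial.C ((A.submatrix Fin.castSucc j.succAbove).det) := by
    rw [hP, Matrix.det_succ_row _ (Fin.last i)]
    refine Finset.sum_congr rfl fun j _ => ?_
    have hlast : ¬ ((Fin.last i : Fin (i+1)) : ℕ) < i := by simp
    rw [Matrix.of_apply, if_neg hlast, Fin.succAbove_last, Fin.val_last]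
    congr 1
    have hsub : ((Matrix.of fun a b : Fin (i + 1) =>
        if (a : ℕ) < i then Polynomial.C (s (l - ((a : ℕ) : ℤ) + ((b : ℕ) : ℤ)))
        else Polynomial.X ^ (b : ℕ)).submatrix Fin.castSucc j.succAbove)
        = (Polynomial.C : F →+* Polynomial F).mapMatrix
            (A.submatrix Fin.castSucc j.succAbove) := by
      funext a b
      have ha : ((Fin.castSucc a : Fin (i+1)) : ℕ) < i := by
        simp [a.isLt]
      simp [Matrix.submatrix_apply, hAdef, ha]
    rw [hsub, ← RingHom.map_det]
  rw [hPexp, map_sum]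
  rw [Finset.mul_sum, Finset.sum_mul, Matrix.sum_apply]
  have hterm : ∀ j : Fin (i+1),
      (((hX.unit ^ m : (Matrix (Fin n) (Fin n) F)ˣ) : Matrix (Fin n) (Fin n) F) *
        Polynomial.aeval X ((-1) ^ (i + (j : ℕ)) * Polynomial.X ^ (j : ℕ) *
          Polynomial.C ((A.submatrix Fin.castSucc j.succAbove).det)) *
        ((hX.unit ^ α : (Matrix (Fin n) (Fin n) F)ˣ) : Matrix (Fin n) (Fin n) F)) 0 0
      = (-1) ^ (i + (j : ℕ)) * s (m + α + ((j : ℕ) : ℤ)) *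
          (A.submatrix Fin.castSucc j.succAbove).det := by
    intro j
    set d : F := (A.submatrix Fin.castSucc j.succAbove).det with hd
    have hrw : ((-1 : Polynomial F)) ^ (i + (j : ℕ)) * Polynomial.X ^ (j : ℕ) *
        Polynomial.C d = Polynomial.C ((-1) ^ (i + (j : ℕ)) * d) * Polynomial.X ^ (j : ℕ) := by
      rw [Polynomial.C_mul,
        show ((-1 : Polynomial F)) ^ (i + (j : ℕ)) = Polynomial.C ((-1 : F) ^ (i + (j : ℕ)))
          by simp]
      ring
    have haev : Polynomial.aeval X ((-1) ^ (i + (j : ℕ)) * Polynomial.X ^ (j : ℕ) *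
        Polynomial.C d) = ((-1) ^ (i + (j : ℕ)) * d : F) • X ^ (j : ℕ) := by
      rw [hrw, map_mul, Polynomial.aeval_C, Polynomial.aeval_X_pow,
        Algebra.algebraMap_eq_smul_one, smul_mul_assoc, one_mul]
    rw [haev, Matrix.mul_smul, Matrix.smul_mul, Matrix.smul_apply, hpow, smul_eq_mul]
    ring
  rw [Finset.sum_congr rfl fun j _ => hterm j]
  have hAexp : A.det = ∑ j : Fin (i+1), (-1) ^ (i + (j : ℕ)) * s (m + α + ((j : ℕ) : ℤ)) *
      (A.submatrix Fin.castSucc j.succAbove).det := by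
    rw [Matrix.det_succ_row _ (Fin.last i)]
    refine Finset.sum_congr rfl fun j _ => ?_
    have hlast : ¬ ((Fin.last i : Fin (i+1)) : ℕ) < i := by simp
    rw [hAdef, Matrix.of_apply, if_neg hlast, Fin.succAbove_last, Fin.val_last]
  rw [← hAexp, hAdet]
end

section
/- Let X be an invertible n×n matrix with moments s_j = e_1^T X^j e_1 (j ∈ ℤ). Fix integers l, m and 0 ≤ i < n, and set R(λ) = λ^m P_i^{(l)}(λ), where P_i^{(l)}(λ) is the determinant of the (i+1)×(i+1) matrix whose row α (for α = 1,...,i) is (s_{l−α+1},...,s_{l−α+1+i}) and whose last row is (1, λ, ..., λ^i). Then e_1^T R(X) X^{l−m+1} e_1 = (−1)^i det T^{(l+1)}_{i+1}, where T^{(k)}_j denotes the j×j Toeplitz matrix (s_{k+α−β})_{α,β=1}^j. -/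
open Polynomial Matrix


/-- `e₁ᵀ R(X) X^{l−m+1} e₁ = (−1)^i det T^{(l+1)}_{i+1}` for
`R(λ) = λ^m 𝒫_i^{(l)}(λ)` built from the moments of an invertible matrix `X`. -/
theorem moment_laurent_top_value {F : Type*} [Field F] {n : ℕ} [NeZero n]
    (X : Matrix (Fin n) (Fin n) F) (hX : IsUnit X)
    (s : ℤ → F)
    (hs : ∀ j : ℤ, s j =
      ((hX.unit ^ j : (Matrix (Fin n) (Fin n) F)ˣ) : Matrix (Fin n) (Fin n) F) 0 0)
    (l m : ℤ) (i : ℕ) (hi : i < n)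
    (P : Polynomial F)
    (hP : P = Matrix.det (Matrix.of fun a b : Fin (i + 1) =>
      if (a : ℕ) < i then Polynomial.C (s (l - ((a : ℕ) : ℤ) + ((b : ℕ) : ℤ)))
      else Polynomial.X ^ (b : ℕ))) :
    (((hX.unit ^ m : (Matrix (Fin n) (Fin n) F)ˣ) : Matrix (Fin n) (Fin n) F) *
      Polynomial.aeval X P *
      ((hX.unit ^ (l - m + 1) : (Matrix (Fin n) (Fin n) F)ˣ) : Matrix (Fin n) (Fin n) F)) 0 0
      = (-1 : F) ^ i *
        Matrix.det (Matrix.of fun a b : Fin (i + 1) =>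
          s ((l + 1) + ((a : ℕ) : ℤ) - ((b : ℕ) : ℤ))) := by
  set c : Fin (i+1) → F := fun j =>
    (Matrix.of fun r k : Fin i =>
      s (l - ((r : ℕ) : ℤ) + (((j.succAbove k : Fin (i+1)) : ℕ) : ℤ))).det with hc
  -- Step 1: expansion of P along the last row
  have hPsum : P = ∑ j : Fin (i+1),
      Polynomial.C ((-1 : F) ^ (i + (j : ℕ)) * c j) * Polynomial.X ^ (j : ℕ) := by
    rw [hP, Matrix.det_succ_row _ (Fin.last i)]
    refine Finset.sum_congr rfl fun j _ => ?_
    have h1 : (Matrix.of fun a b : Fin (i + 1) =>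
        if (a : ℕ) < i then Polynomial.C (s (l - ((a : ℕ) : ℤ) + ((b : ℕ) : ℤ)))
        else Polynomial.X ^ (b : ℕ)) (Fin.last i) j = Polynomial.X ^ (j : ℕ) := by
      simp
    have h2 : ((Matrix.of fun a b : Fin (i + 1) =>
        if (a : ℕ) < i then Polynomial.C (s (l - ((a : ℕ) : ℤ) + ((b : ℕ) : ℤ)))
        else Polynomial.X ^ (b : ℕ)).submatrix (Fin.last i).succAbove j.succAbove).det
        = Polynomial.C (c j) := by
      rw [hc, RingHom.map_det]
      congr 1
      ext r k
      simp [Fin.succAbove_last, Fin.is_lt, Matrix.map_apply]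
    rw [h1, h2, Fin.val_last, _root_.map_mul, map_pow, map_neg, Polynomial.C_1]
    ring
  -- Step 2: moments of products of powers
  have hmom : ∀ j : ℕ,
      (((hX.unit ^ m : (Matrix (Fin n) (Fin n) F)ˣ) : Matrix (Fin n) (Fin n) F) * X ^ j *
        ((hX.unit ^ (l - m + 1) : (Matrix (Fin n) (Fin n) F)ˣ) : Matrix (Fin n) (Fin n) F)) 0 0
        = s (l + 1 + (j : ℤ)) := by
    intro j
    have hXU : X ^ j = ((hX.unit ^ ((j : ℕ) : ℤ) : (Matrix (Fin n) (Fin n) F)ˣ) :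
        Matrix (Fin n) (Fin n) F) := by
      rw [zpow_natCast, Units.val_pow_eq_pow_val, IsUnit.unit_spec]
    rw [hXU, ← Units.val_mul, ← Units.val_mul, ← _root_.zpow_add, ← _root_.zpow_add, hs]
    congr 2
    ring
  -- Step 3: compute the LHS
  have hLHS : (((hX.unit ^ m : (Matrix (Fin n) (Fin n) F)ˣ) : Matrix (Fin n) (Fin n) F) *
      Polynomial.aeval X P *
      ((hX.unit ^ (l - m + 1) : (Matrix (Fin n) (Fin n) F)ˣ) : Matrix (Fin n) (Fin n) F)) 0 0
      = ∑ j : Fin (i+1), (-1 : F) ^ (i + (j : ℕ)) * c j * s (l + 1 + ((j : ℕ) : ℤ)) := by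
    rw [hPsum, map_sum, Finset.mul_sum, Finset.sum_mul, Matrix.sum_apply]
    refine Finset.sum_congr rfl fun j _ => ?_
    rw [_root_.map_mul, map_pow, aeval_X, aeval_C, Algebra.algebraMap_eq_smul_one,
      smul_mul_assoc, one_mul, mul_smul_comm, smul_mul_assoc, Matrix.smul_apply, hmom,
      smul_eq_mul]
  rw [hLHS]
  -- Step 4: expand the RHS determinant along column zero
  rw [Matrix.det_succ_column_zero, Finset.mul_sum]
  refine Finset.sum_congr rfl fun a _ => ?_
  have hminor : ((Matrix.of fun a b : Fin (i + 1) =>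
      s ((l + 1) + ((a : ℕ) : ℤ) - ((b : ℕ) : ℤ))).submatrix a.succAbove Fin.succ).det
      = c a := by
    rw [hc, ← Matrix.det_transpose]
    congr 1
    ext r k
    simp only [Matrix.transpose_apply, Matrix.submatrix_apply, Matrix.of_apply]
    congr 1
    push_cast [Fin.val_succ]
    ring
  rw [hminor]
  simp only [Matrix.of_apply, Fin.val_zero, Nat.cast_zero, sub_zero, pow_add]
  ring
end

section
/- Let X be an invertible n×n matrix with moments s_j = e_1^T X^j e_1 (j ∈ ℤ). Fix integers l, m and 0 ≤ i < n, and set R(λ) = λ^m P_i^{(l)}(λ) as above. Then e_1^T R(X) X^{l−m−i} e_1 = det T^{(l)}_{i+1}, where T^{(l)}_{i+1} = (s_{l+α−β})_{α,β=1}^{i+1}. -/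
/-- `e₁ᵀ R(X) X^{l−m−i} e₁ = det T^{(l)}_{i+1}` for
`R(λ) = λ^m 𝒫_i^{(l)}(λ)` built from the moments of an invertible matrix `X`. -/
theorem moment_laurent_bottom_value {F : Type*} [Field F] {n : ℕ} [NeZero n]
    (X : Matrix (Fin n) (Fin n) F) (hX : IsUnit X)
    (s : ℤ → F)
    (hs : ∀ j : ℤ, s j =
      ((hX.unit ^ j : (Matrix (Fin n) (Fin n) F)ˣ) : Matrix (Fin n) (Fin n) F) 0 0)
    (l m : ℤ) (i : ℕ) (hi : i < n)
    (P : Polynomial F)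
    (hP : P = Matrix.det (Matrix.of fun a b : Fin (i + 1) =>
      if (a : ℕ) < i then Polynomial.C (s (l - ((a : ℕ) : ℤ) + ((b : ℕ) : ℤ)))
      else Polynomial.X ^ (b : ℕ))) :
    (((hX.unit ^ m : (Matrix (Fin n) (Fin n) F)ˣ) : Matrix (Fin n) (Fin n) F) *
      Polynomial.aeval X P *
      ((hX.unit ^ (l - m - (i : ℤ)) : (Matrix (Fin n) (Fin n) F)ˣ) : Matrix (Fin n) (Fin n) F)) 0 0
      = Matrix.det (Matrix.of fun a b : Fin (i + 1) =>
          s (l + ((a : ℕ) : ℤ) - ((b : ℕ) : ℤ))) := by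
  set U := hX.unit with hU
  set N : Matrix (Fin (i+1)) (Fin (i+1)) F :=
    Matrix.of (fun a b : Fin (i+1) => s (l - ((a : ℕ) : ℤ) + ((b : ℕ) : ℤ))) with hN
  -- RHS equals det N (reverse rows and columns)
  have hRHS : Matrix.det (Matrix.of fun a b : Fin (i + 1) =>
      s (l + ((a : ℕ) : ℤ) - ((b : ℕ) : ℤ))) = N.det := by
    have : (Matrix.of fun a b : Fin (i + 1) => s (l + ((a : ℕ) : ℤ) - ((b : ℕ) : ℤ)))
        = N.submatrix Fin.rev Fin.rev := by
      ext a b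
      simp only [Matrix.of_apply, Matrix.submatrix_apply, hN, Fin.val_rev]
      congr 1
      have ha := a.is_lt
      have hb := b.is_lt
      omega
    rw [this]
    exact Matrix.det_submatrix_equiv_self Fin.revPerm N
  rw [hRHS]
  -- minor determinant
  set d : Fin (i+1) → F :=
    fun j => (N.submatrix (Fin.last i).succAbove j.succAbove).det with hd
  -- rewrite P as an explicit sum
  have hPsum : P = ∑ j : Fin (i+1),
      Polynomial.C ((-1) ^ (i + (j : ℕ)) * d j) * Polynomial.X ^ (j : ℕ) := by
    rw [hP, Matrix.det_succ_row _ (Fin.last i)]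
    refine Finset.sum_congr rfl fun j _ => ?_
    have hmat : ((Matrix.of fun a b : Fin (i + 1) =>
        if (a : ℕ) < i then Polynomial.C (s (l - ((a : ℕ) : ℤ) + ((b : ℕ) : ℤ)))
        else Polynomial.X ^ (b : ℕ)).submatrix (Fin.last i).succAbove j.succAbove)
        = Polynomial.C.mapMatrix (N.submatrix (Fin.last i).succAbove j.succAbove) := by
      ext a b
      simp [Matrix.submatrix_apply, Fin.succAbove_last_apply, hN, a.is_lt]
    rw [hmat, ← RingHom.map_det]
    have hlast : (Matrix.of fun a b : Fin (i + 1) =>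
        if (a : ℕ) < i then Polynomial.C (s (l - ((a : ℕ) : ℤ) + ((b : ℕ) : ℤ)))
        else Polynomial.X ^ (b : ℕ)) (Fin.last i) j = Polynomial.X ^ (j : ℕ) := by
      simp
    rw [hlast]
    simp only [Fin.val_last, map_mul, map_pow, map_neg, map_one]
    ring
  -- aeval
  have hA : Polynomial.aeval X P =
      ∑ j : Fin (i+1), ((-1) ^ (i + (j : ℕ)) * d j) • X ^ (j : ℕ) := by
    rw [hPsum, map_sum]
    refine Finset.sum_congr rfl fun j _ => ?_
    rw [map_mul, Polynomial.aeval_C, map_pow, Polynomial.aeval_X, Algebra.smul_def]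
  -- powers of X as unit zpow
  have hXpow : ∀ j : ℕ, X ^ j = ((U ^ (j : ℤ) : (Matrix (Fin n) (Fin n) F)ˣ) :
      Matrix (Fin n) (Fin n) F) := by
    intro j
    rw [zpow_natCast, Units.val_pow_eq_pow_val, hU, IsUnit.unit_spec]
  rw [hA, Finset.mul_sum, Finset.sum_mul, Matrix.sum_apply]
  rw [Matrix.det_succ_row N (Fin.last i)]
  refine Finset.sum_congr rfl fun j _ => ?_
  have hterm : ((U ^ m : (Matrix (Fin n) (Fin n) F)ˣ) : Matrix (Fin n) (Fin n) F) *
      (((-1) ^ (i + (j : ℕ)) * d j) • X ^ (j : ℕ)) *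
      ((U ^ (l - m - (i : ℤ)) : (Matrix (Fin n) (Fin n) F)ˣ) : Matrix (Fin n) (Fin n) F)
      = ((-1) ^ (i + (j : ℕ)) * d j) •
        (((U ^ (l - (i : ℤ) + (j : ℕ)) : (Matrix (Fin n) (Fin n) F)ˣ) :
          Matrix (Fin n) (Fin n) F)) := by
    rw [mul_smul_comm, smul_mul_assoc]
    congr 1
    rw [hXpow j, ← Units.val_mul, ← Units.val_mul, ← zpow_add, ← zpow_add]
    congr 1
    ring
  rw [hterm, Matrix.smul_apply, smul_eq_mul, ← hs]
  have hNlast : N (Fin.last i) j = s (l - (i : ℤ) + (j : ℕ)) := by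
    simp [hN]
  rw [hNlast]
  simp only [Fin.val_last, hd]
  ring
end

section
/- Let X = (J+D)(1+U_1)(1−U_2)^{−1} with J the unit lower shift, D = diag(d_1,...,d_n) invertible, U_1 = Σ(1−ε_α)c_α E_{α,α+1}, U_2 = Σ ε_α c_α E_{α,α+1}, ε_α ∈ {0,1}. Then the monic polynomials p_i determined by the truncated eigenvalue problem for X satisfy the three-term recursion p_{i+1}(λ) + b_{i+1} p_i(λ) + (1−ε_i) a_i p_{i−1}(λ) = λ (p_i(λ) − ε_i c_i p_{i−1}(λ)) for i = 0,...,n−1, where b_i = d_i + (1−ε_{i−1}) c_{i−1}, a_i = d_i c_i, and c_0 = ε_0 = 0. -/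
noncomputable def hessX {F : Type*} [Field F] (n : ℕ) (c d : ℕ → F) (ε : ℕ → ℕ) :
    Matrix (Fin n) (Fin n) F :=
  (Matrix.of (fun a b : Fin n => if (a : ℕ) = (b : ℕ) + 1 then (1 : F) else 0) +
    Matrix.diagonal (fun i : Fin n => d ((i : ℕ) + 1))) *
  (1 + Matrix.of (fun a b : Fin n =>
    if (b : ℕ) = (a : ℕ) + 1 then (1 - (ε ((a : ℕ) + 1) : F)) * c ((a : ℕ) + 1) else 0)) *
  (1 - Matrix.of (fun a b : Fin n =>
    if (b : ℕ) = (a : ℕ) + 1 then ((ε ((a : ℕ) + 1) : F)) * c ((a : ℕ) + 1) else 0))⁻¹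

section aux
variable {F : Type*} [Field F]

/-- J + D -/
noncomputable def hessJD (n : ℕ) (d : ℕ → F) : Matrix (Fin n) (Fin n) F :=
  Matrix.of (fun a b : Fin n => if (a : ℕ) = (b : ℕ) + 1 then (1 : F) else 0) +
    Matrix.diagonal (fun i : Fin n => d ((i : ℕ) + 1))

/-- generic superdiagonal matrix with entries f(col index) -/
noncomputable def hessSup (n : ℕ) (f : ℕ → F) : Matrix (Fin n) (Fin n) F :=
  Matrix.of (fun a b : Fin n => if (b : ℕ) = (a : ℕ) + 1 then f ((a : ℕ) + 1) else 0)

/-- M = (J+D)(1+U₁) -/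
noncomputable def hessM (n : ℕ) (c d : ℕ → F) (ε : ℕ → ℕ) : Matrix (Fin n) (Fin n) F :=
  hessJD n d * (1 + hessSup n (fun k => (1 - (ε k : F)) * c k))

/-- N = 1 - U₂ -/
noncomputable def hessN (n : ℕ) (c : ℕ → F) (ε : ℕ → ℕ) : Matrix (Fin n) (Fin n) F :=
  1 - hessSup n (fun k => ((ε k : F)) * c k)

lemma hessN_det (n : ℕ) (c : ℕ → F) (ε : ℕ → ℕ) : (hessN n c ε).det = 1 := by
  have h : (hessN n c ε).BlockTriangular id := by
    intro a b hab
    have hba : (b:ℕ) < (a:ℕ) := hab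
    simp only [hessN, hessSup, Matrix.sub_apply, Matrix.one_apply, Matrix.of_apply]
    rw [if_neg (fun h => by simp [h] at hba), if_neg (by omega : ¬ ((b:ℕ) = (a:ℕ) + 1))]
    ring
  rw [Matrix.det_of_upperTriangular h]
  have : ∀ i : Fin n, hessN n c ε i i = 1 := by
    intro i
    simp [hessN, hessSup, Matrix.one_apply]
  simp [this]

lemma hessX_mul_hessN (n : ℕ) (c d : ℕ → F) (ε : ℕ → ℕ) :
    hessX n c d ε * hessN n c ε = hessM n c d ε := by
  have h : IsUnit (hessN n c ε).det := by rw [hessN_det]; exact isUnit_one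
  have e : hessX n c d ε = hessM n c d ε * (hessN n c ε)⁻¹ := rfl
  rw [e, Matrix.nonsing_inv_mul_cancel_right _ _ h]

lemma mul_superdiag {n : ℕ} (A : Matrix (Fin n) (Fin n) F) (f : ℕ → F) (a b : Fin n) :
    (A * hessSup n f) a b =
      if h : 1 ≤ (b:ℕ) then A a ⟨(b:ℕ)-1, by omega⟩ * f (b:ℕ) else 0 := by
  rw [Matrix.mul_apply]
  by_cases hb : 1 ≤ (b:ℕ)
  · rw [dif_pos hb, Finset.sum_eq_single (⟨(b:ℕ)-1, by omega⟩ : Fin n)]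
    · simp only [hessSup, Matrix.of_apply]
      rw [if_pos (by omega)]
      congr 2
      omega
    · intro k _ hk
      simp only [hessSup, Matrix.of_apply]
      rw [if_neg]
      · ring
      · intro h
        exact hk (Fin.ext (by simp at h ⊢; omega))
    · intro h; exact absurd (Finset.mem_univ _) h
  · rw [dif_neg hb]
    apply Finset.sum_eq_zero
    intro k _
    simp only [hessSup, Matrix.of_apply]
    rw [if_neg (by omega)]
    ring

lemma hessM_apply (n : ℕ) (c d : ℕ → F) (ε : ℕ → ℕ) (a b : Fin n) :
    hessM n c d ε a b =
      (if (a:ℕ) = (b:ℕ)+1 then 1 else 0) + (if (a:ℕ) = (b:ℕ) then d ((a:ℕ)+1) else 0)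
      + (if (b:ℕ) = (a:ℕ)+1 then d ((a:ℕ)+1) * ((1 - (ε (b:ℕ):F)) * c (b:ℕ)) else 0)
      + (if (a:ℕ) = (b:ℕ) ∧ 1 ≤ (b:ℕ) then (1-(ε (b:ℕ):F)) * c (b:ℕ) else 0) := by
  have : hessM n c d ε = hessJD n d + hessJD n d * hessSup n (fun k => (1 - (ε k : F)) * c k) := by
    rw [hessM, mul_add, mul_one]
  rw [this, Matrix.add_apply, mul_superdiag]
  simp only [hessJD, Matrix.add_apply, Matrix.of_apply, Matrix.diagonal_apply, Fin.ext_iff]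
  by_cases hb : 1 ≤ (b:ℕ)
  · rw [dif_pos hb]
    split_ifs <;> first | ring1 | (exfalso; omega)
  · rw [dif_neg hb]
    split_ifs <;> first | ring1 | (exfalso; omega)

lemma hessX_entry (n : ℕ) (c d : ℕ → F) (ε : ℕ → ℕ) (a b : Fin n) :
    hessX n c d ε a b = hessM n c d ε a b +
      (if h : 1 ≤ (b:ℕ) then (ε (b:ℕ):F) * c (b:ℕ) * hessX n c d ε a ⟨(b:ℕ)-1, by omega⟩
       else 0) := by
  have key : hessX n c d ε = hessM n c d ε +
      hessX n c d ε * hessSup n (fun k => ((ε k : F)) * c k) := by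
    have h := hessX_mul_hessN n c d ε
    rw [hessN, mul_sub, mul_one] at h
    exact (sub_eq_iff_eq_add.mp h).trans (by ring)
  conv_lhs => rw [key]
  rw [Matrix.add_apply, mul_superdiag]
  congr 1
  split_ifs with h
  · ring
  · rfl


/-- ℕ-indexed entries of hessX -/
noncomputable def XE (n : ℕ) (c d : ℕ → F) (ε : ℕ → ℕ) (a b : ℕ) : F :=
  if h : a < n ∧ b < n then hessX n c d ε ⟨a, h.1⟩ ⟨b, h.2⟩ else 0

/-- ℕ-indexed entries of hessM -/
noncomputable def ME (n : ℕ) (c d : ℕ → F) (ε : ℕ → ℕ) (a b : ℕ) : F :=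
  if h : a < n ∧ b < n then hessM n c d ε ⟨a, h.1⟩ ⟨b, h.2⟩ else 0

lemma ME_eq (n : ℕ) (c d : ℕ → F) (ε : ℕ → ℕ) (a b : ℕ) (ha : a < n) (hb : b < n) :
    ME n c d ε a b =
      (if a = b+1 then 1 else 0) + (if a = b then d (a+1) else 0)
      + (if b = a+1 then d (a+1) * ((1 - (ε b:F)) * c b) else 0)
      + (if a = b ∧ 1 ≤ b then (1-(ε b:F)) * c b else 0) := by
  rw [ME, dif_pos ⟨ha, hb⟩, hessM_apply]

lemma XE_rec (n : ℕ) (c d : ℕ → F) (ε : ℕ → ℕ) (a b : ℕ) (ha : a < n) (hb : b < n)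
    (hb1 : 1 ≤ b) :
    XE n c d ε a b = ME n c d ε a b + (ε b : F) * c b * XE n c d ε a (b-1) := by
  have h := hessX_entry n c d ε ⟨a, ha⟩ ⟨b, hb⟩
  rw [dif_pos (hb1 : 1 ≤ b)] at h
  rw [XE, dif_pos ⟨ha, hb⟩, h, ME, dif_pos ⟨ha, hb⟩, XE,
    dif_pos (⟨ha, by omega⟩ : a < n ∧ b - 1 < n)]

lemma XE_zero (n : ℕ) (c d : ℕ → F) (ε : ℕ → ℕ) (a b : ℕ) (h : b + 1 < a) :
    XE n c d ε a b = 0 := by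
  by_cases hab : a < n ∧ b < n
  · induction b using Nat.strong_induction_on generalizing a with
    | _ b ih =>
      by_cases hb1 : 1 ≤ b
      · rw [XE_rec n c d ε a b hab.1 hab.2 hb1, ME_eq n c d ε a b hab.1 hab.2]
        rw [ih (b-1) (by omega) a (by omega) ⟨hab.1, by omega⟩]
        rw [if_neg (by omega), if_neg (by omega), if_neg (by omega), if_neg (by omega)]
        ring
      · have hb0 : b = 0 := by omega
        subst hb0
        rw [XE, dif_pos hab, hessX_entry, dif_neg (by simp)]
        rw [hessM_apply]
        rw [if_neg (by first | omega | (simp only [Fin.val_mk]; omega) | simp),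
          if_neg (by first | omega | (simp only [Fin.val_mk]; omega) | simp),
          if_neg (by first | omega | (simp only [Fin.val_mk]; omega) | simp),
          if_neg (by first | omega | (simp only [Fin.val_mk]; omega) | simp)]
        ring
  · rw [XE, dif_neg hab]

lemma XE_subdiag (n : ℕ) (c d : ℕ → F) (ε : ℕ → ℕ) (b : ℕ) (hb : b + 1 < n) :
    XE n c d ε (b+1) b = 1 := by
  by_cases hb1 : 1 ≤ b
  · rw [XE_rec n c d ε (b+1) b hb (by omega) hb1, ME_eq n c d ε (b+1) b hb (by omega)]
    rw [XE_zero n c d ε (b+1) (b-1) (by omega)]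
    rw [if_pos rfl, if_neg (by omega), if_neg (by omega), if_neg (by omega)]
    ring
  · have hb0 : b = 0 := by omega
    subst hb0
    rw [XE, dif_pos ⟨hb, by omega⟩, hessX_entry, dif_neg (by simp)]
    rw [hessM_apply]
    rw [if_pos (by simp), if_neg (by simp), if_neg (by simp), if_neg (by simp)]
    ring

lemma hrecXE {n : ℕ} (c d : ℕ → F) (ε : ℕ → ℕ) (p : ℕ → Polynomial F)
    (hrec : ∀ i : ℕ, ∀ h1 : 1 ≤ i, ∀ hin : i ≤ n,
      p i = Polynomial.X * p (i - 1) -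
        ∑ α : Fin i, Polynomial.C ((hessX n c d ε) ⟨α, lt_of_lt_of_le α.2 hin⟩ ⟨i - 1, lt_of_lt_of_le (Nat.sub_lt h1 Nat.one_pos) hin⟩) * p α)
    (i : ℕ) (h1 : 1 ≤ i) (hin : i ≤ n) :
    p i = Polynomial.X * p (i - 1) -
      ∑ α ∈ Finset.range i, Polynomial.C (XE n c d ε α (i-1)) * p α := by
  rw [hrec i h1 hin]
  congr 1
  rw [← Fin.sum_univ_eq_sum_range (fun m => Polynomial.C (XE n c d ε m (i-1)) * p m) i]
  apply Finset.sum_congr rfl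
  intro α _
  congr 1
  rw [XE, dif_pos ⟨by omega, by omega⟩]

lemma sum_key {n : ℕ} (c d : ℕ → F) (ε : ℕ → ℕ)
    (hc0 : c 0 = 0) (hε0 : ε 0 = 0) (p : ℕ → Polynomial F)
    (hrec : ∀ i : ℕ, ∀ h1 : 1 ≤ i, ∀ hin : i ≤ n,
      p i = Polynomial.X * p (i - 1) -
        ∑ α : Fin i, Polynomial.C ((hessX n c d ε) ⟨α, lt_of_lt_of_le α.2 hin⟩ ⟨i - 1, lt_of_lt_of_le (Nat.sub_lt h1 Nat.one_pos) hin⟩) * p α)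
    (j : ℕ) (hj : j < n) :
    (∑ α ∈ Finset.range (j+1), Polynomial.C (XE n c d ε α j) * p α) =
      Polynomial.C (d (j+1) + (1-(ε j:F))*c j) * p j
      + Polynomial.C ((1-(ε j:F))*(d j * c j)) * p (j-1)
      + Polynomial.C ((ε j:F) * c j) * (Polynomial.X * p (j-1)) := by
  by_cases hj1 : 1 ≤ j
  · have hXEr : ∀ α ∈ Finset.range (j+1), Polynomial.C (XE n c d ε α j) * p α =
        Polynomial.C (ME n c d ε α j) * p α
        + Polynomial.C ((ε j:F) * c j) * (Polynomial.C (XE n c d ε α (j-1)) * p α) := by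
      intro α hα
      rw [Finset.mem_range] at hα
      rw [XE_rec n c d ε α j (by omega) hj hj1]
      rw [map_add, map_mul]
      ring
    rw [Finset.sum_congr rfl hXEr, Finset.sum_add_distrib, ← Finset.mul_sum]
    have hME : ∑ α ∈ Finset.range (j+1), Polynomial.C (ME n c d ε α j) * p α =
        Polynomial.C (d (j+1) + (1-(ε j:F))*c j) * p j
        + Polynomial.C ((1-(ε j:F))*(d j * c j)) * p (j-1) := by
      have hsplit : j + 1 = (j-1) + 1 + 1 := by omega
      rw [hsplit, Finset.sum_range_succ, Finset.sum_range_succ]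
      have h0 : ∑ α ∈ Finset.range (j-1), Polynomial.C (ME n c d ε α j) * p α = 0 := by
        apply Finset.sum_eq_zero
        intro α hα
        rw [Finset.mem_range] at hα
        rw [ME_eq n c d ε α j (by omega) hj]
        rw [if_neg (by omega), if_neg (by omega), if_neg (by omega), if_neg (by omega)]
        simp
      rw [h0, zero_add]
      have e1 : j - 1 + 1 = j := by omega
      rw [e1]
      rw [ME_eq n c d ε (j-1) j (by omega) hj, ME_eq n c d ε j j (by omega) hj]
      rw [if_neg (by omega), if_neg (by omega), if_pos e1.symm, if_neg (by omega)]
      rw [if_neg (by omega), if_pos rfl, if_neg (by omega), if_pos ⟨rfl, hj1⟩]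
      rw [e1]
      simp only [map_add, map_mul, map_sub, map_one, map_zero]
      ring
    have hX2 : ∑ α ∈ Finset.range (j+1), Polynomial.C (XE n c d ε α (j-1)) * p α =
        Polynomial.X * p (j-1) := by
      rw [Finset.sum_range_succ]
      have hsub : XE n c d ε j (j-1) = 1 := by
        have h := XE_subdiag n c d ε (j-1) (by omega)
        rwa [show j - 1 + 1 = j from by omega] at h
      rw [hsub]
      have hr := hrecXE c d ε p hrec j hj1 (le_of_lt hj)
      have hS : ∑ α ∈ Finset.range j, Polynomial.C (XE n c d ε α (j-1)) * p α
          = Polynomial.X * p (j-1) - p j := by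
        linear_combination hr
      rw [hS, map_one]
      ring
    rw [hME, hX2]
  · have hj0 : j = 0 := by omega
    subst hj0
    rw [Finset.sum_range_one]
    have h00 : XE n c d ε 0 0 = d 1 := by
      rw [XE, dif_pos ⟨hj, hj⟩, hessX_entry,
        dif_neg (by first | omega | (simp only [Fin.val_mk]; omega) | simp), hessM_apply]
      rw [if_neg (by first | omega | (simp only [Fin.val_mk]; omega) | simp),
        if_pos (by first | omega | (simp only [Fin.val_mk]; omega) | simp),
        if_neg (by first | omega | (simp only [Fin.val_mk]; omega) | simp),
        if_neg (by first | omega | (simp only [Fin.val_mk]; omega) | simp)]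
      simp
    rw [h00, hε0, hc0]
    simp

end aux

/-- the monic polynomials of the truncated eigenvalue problem for the
factorized Hessenberg matrix satisfy the three-term recursion
`p_{i+1} + b_{i+1} p_i + (1−ε_i) a_i p_{i−1} = λ (p_i − ε_i c_i p_{i−1})`,
with `b_i = d_i + (1−ε_{i−1}) c_{i−1}`, `a_i = d_i c_i`, `c_0 = ε_0 = 0`. -/
theorem factorized_hessenberg_three_term {F : Type*} [Field F] {n : ℕ}
    (c d : ℕ → F) (ε : ℕ → ℕ) (hε : ∀ α, ε α = 0 ∨ ε α = 1)
    (hc0 : c 0 = 0) (hε0 : ε 0 = 0)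
    (p : ℕ → Polynomial F)
    (hp0 : p 0 = 1)
    (hrec : ∀ i : ℕ, ∀ h1 : 1 ≤ i, ∀ hin : i ≤ n,
      p i = Polynomial.X * p (i - 1) -
        ∑ α : Fin i, Polynomial.C ((hessX n c d ε) ⟨α, by omega⟩ ⟨i - 1, by omega⟩) * p α) :
    ∀ i : ℕ, i < n →
      p (i + 1) + Polynomial.C (d (i + 1) + (1 - (ε i : F)) * c i) * p i +
          Polynomial.C ((1 - (ε i : F)) * (d i * c i)) * p (i - 1) =
        Polynomial.X * (p i - Polynomial.C ((ε i : F) * c i) * p (i - 1)) := by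
  intro i hi
  have hr := hrecXE c d ε p hrec (i+1) (by omega) (by omega)
  rw [show i + 1 - 1 = i from rfl] at hr
  rw [sum_key c d ε hc0 hε0 p hrec i hi] at hr
  rw [hr]
  ring
end

section
/- Let X = (1 − U_2^T)^{−1}(1 + U_1^T) D (1 + U_1)(1 − U_2)^{−1} be the symmetric factorized matrix, where D = diag(d_1,...,d_n), U_1 = Σ(1−ε_α)c_α E_{α,α+1}, U_2 = Σ ε_α c_α E_{α,α+1}, ε_α ∈ {0,1}. Then X is symmetric and det X = d_1 ⋯ d_n. More generally, for each m, the upper-left m×m principal minor of X depends only on d_1,...,d_m and c_1,...,c_{m−1}. -/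
open Matrix Finset

/-- The symmetric factorized matrix `X = (1−U₂ᵀ)^{-1}(1+U₁ᵀ) D (1+U₁)(1−U₂)^{-1}`
with 1-based parameters `c, d` and `ε ∈ {0,1}`. -/
noncomputable def symX {F : Type*} [Field F] (n : ℕ) (c d : ℕ → F) (ε : ℕ → ℕ) :
    Matrix (Fin n) (Fin n) F :=
  let U1 : Matrix (Fin n) (Fin n) F := Matrix.of fun a b : Fin n =>
    if (b : ℕ) = (a : ℕ) + 1 then (1 - (ε ((a : ℕ) + 1) : F)) * c ((a : ℕ) + 1) else 0
  let U2 : Matrix (Fin n) (Fin n) F := Matrix.of fun a b : Fin n =>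
    if (b : ℕ) = (a : ℕ) + 1 then ((ε ((a : ℕ) + 1) : F)) * c ((a : ℕ) + 1) else 0
  (1 - U2ᵀ)⁻¹ * (1 + U1ᵀ) * Matrix.diagonal (fun i : Fin n => d ((i : ℕ) + 1)) *
    (1 + U1) * (1 - U2)⁻¹


section helpers

variable {F : Type*} [Field F] {n : ℕ}

/-- strictly-upper matrix with entries on the first superdiagonal -/
def supd (n : ℕ) (f : ℕ → F) : Matrix (Fin n) (Fin n) F :=
  Matrix.of fun a b : Fin n => if (b : ℕ) = (a : ℕ) + 1 then f ((a : ℕ) + 1) else 0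

lemma supd_bt (f : ℕ → F) : BlockTriangular (supd n f) id := by
  intro i j h
  simp only [supd, of_apply]
  have h' : (j:ℕ) < (i:ℕ) := h
  have : ¬ ((j:ℕ) = (i:ℕ) + 1) := by omega
  simp [this]

lemma bt_one_add (f : ℕ → F) : BlockTriangular (1 + supd n f) (id : Fin n → Fin n) :=
  blockTriangular_one.add (supd_bt f)

lemma bt_one_sub (f : ℕ → F) : BlockTriangular (1 - supd n f) (id : Fin n → Fin n) :=
  blockTriangular_one.sub (supd_bt f)

lemma diag_one_add (f : ℕ → F) (i : Fin n) : (1 + supd n f) i i = 1 := by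
  simp [supd, Matrix.one_apply]

lemma diag_one_sub (f : ℕ → F) (i : Fin n) : (1 - supd n f) i i = 1 := by
  simp [supd, Matrix.one_apply]

lemma det_one_add (f : ℕ → F) : (1 + supd n f).det = 1 := by
  rw [Matrix.det_of_upperTriangular (bt_one_add f)]
  exact Finset.prod_eq_one fun i _ => diag_one_add f i

lemma det_one_sub (f : ℕ → F) : (1 - supd n f).det = 1 := by
  rw [Matrix.det_of_upperTriangular (bt_one_sub f)]
  exact Finset.prod_eq_one fun i _ => diag_one_sub f i

lemma isUnit_det_one_sub (f : ℕ → F) : IsUnit (1 - supd n f).det := by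
  rw [det_one_sub]; exact isUnit_one

lemma bt_inv_one_sub (f : ℕ → F) : BlockTriangular (1 - supd n f)⁻¹ (id : Fin n → Fin n) := by
  have := Matrix.invertibleOfIsUnitDet _ (isUnit_det_one_sub (n := n) f)
  exact blockTriangular_inv_of_blockTriangular (bt_one_sub f)

lemma det_inv_one_sub (f : ℕ → F) : (1 - supd n f)⁻¹.det = 1 := by
  rw [Matrix.det_nonsing_inv, det_one_sub, Ring.inverse_one]

lemma sum_restrict {m : ℕ} (hm : m ≤ n) (g : Fin n → F)
    (hg : ∀ k : Fin n, m ≤ (k : ℕ) → g k = 0) :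
    ∑ k : Fin n, g k = ∑ k : Fin m, g (Fin.castLE hm k) := by
  have : ∑ k : Fin m, g (Fin.castLE hm k) =
      ∑ k ∈ Finset.univ.map (Fin.castLEEmb hm), g k :=
    (Finset.sum_map Finset.univ (Fin.castLEEmb hm) g).symm
  rw [this]
  symm
  apply Finset.sum_subset (Finset.subset_univ _)
  intro k _ hk
  apply hg
  by_contra h
  push_neg at h
  exact hk (Finset.mem_map.2 ⟨⟨(k : ℕ), h⟩, Finset.mem_univ _, by
    simp [Fin.castLEEmb]⟩)

lemma blk_mul {m : ℕ} (hm : m ≤ n) (A B : Matrix (Fin n) (Fin n) F)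
    (hB : BlockTriangular B (id : Fin n → Fin n)) :
    (A * B).submatrix (Fin.castLE hm) (Fin.castLE hm) =
      A.submatrix (Fin.castLE hm) (Fin.castLE hm) *
        B.submatrix (Fin.castLE hm) (Fin.castLE hm) := by
  ext i j
  simp only [submatrix_apply, mul_apply]
  apply sum_restrict hm
  intro k hk
  have hlt : (id (Fin.castLE hm j) : Fin n) < id k := by
    simp only [id]
    rw [Fin.lt_iff_val_lt_val]
    simpa using lt_of_lt_of_le j.isLt hk
  rw [hB hlt, mul_zero]

lemma blk_inv {m : ℕ} (hm : m ≤ n) (f : ℕ → F) :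
    ((1 - supd n f)⁻¹).submatrix (Fin.castLE hm) (Fin.castLE hm) =
      ((1 - supd n f).submatrix (Fin.castLE hm) (Fin.castLE hm))⁻¹ := by
  have h1 : (1 - supd n f) * (1 - supd n f)⁻¹ = 1 :=
    mul_nonsing_inv _ (isUnit_det_one_sub f)
  have h2 := congrArg (fun A : Matrix (Fin n) (Fin n) F =>
    A.submatrix (Fin.castLE hm) (Fin.castLE hm)) h1
  rw [blk_mul hm _ _ (bt_inv_one_sub f),
    Matrix.submatrix_one _ (Fin.castLE_injective hm)] at h2
  exact (inv_eq_right_inv h2).symm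

lemma blk_supd_congr {m : ℕ} (hm : m ≤ n) (f f' : ℕ → F)
    (hf : ∀ α, 1 ≤ α → α + 1 ≤ m → f α = f' α) :
    (supd n f).submatrix (Fin.castLE hm) (Fin.castLE hm) =
      (supd n f').submatrix (Fin.castLE hm) (Fin.castLE hm) := by
  ext i j
  simp only [submatrix_apply, supd, of_apply]
  split_ifs with h
  · exact hf _ (by omega) (by
      have hj : (j : ℕ) < m := j.isLt
      have : (Fin.castLE hm j : ℕ) = (j : ℕ) := rfl
      omega)
  · rfl

lemma symX_eq (c d : ℕ → F) (ε : ℕ → ℕ) :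
    symX n c d ε =
      ((1 + supd n (fun α => (1 - (ε α : F)) * c α)) *
          (1 - supd n (fun α => ((ε α : F)) * c α))⁻¹)ᵀ *
        Matrix.diagonal (fun i : Fin n => d ((i : ℕ) + 1)) *
        ((1 + supd n (fun α => (1 - (ε α : F)) * c α)) *
          (1 - supd n (fun α => ((ε α : F)) * c α))⁻¹) := by
  unfold symX supd
  simp only [transpose_mul, transpose_nonsing_inv, transpose_sub, transpose_add,
    transpose_one, Matrix.mul_assoc]

lemma blk_symX {m : ℕ} (hm : m ≤ n) (c d : ℕ → F) (ε : ℕ → ℕ) :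
    (symX n c d ε).submatrix (Fin.castLE hm) (Fin.castLE hm) =
      (((1 : Matrix (Fin m) (Fin m) F) +
          (supd n (fun α => (1 - (ε α : F)) * c α)).submatrix (Fin.castLE hm) (Fin.castLE hm)) *
        ((1 : Matrix (Fin m) (Fin m) F) -
          (supd n (fun α => ((ε α : F)) * c α)).submatrix (Fin.castLE hm) (Fin.castLE hm))⁻¹)ᵀ *
      Matrix.diagonal (fun i : Fin m => d ((i : ℕ) + 1)) *
      (((1 : Matrix (Fin m) (Fin m) F) +
          (supd n (fun α => (1 - (ε α : F)) * c α)).submatrix (Fin.castLE hm) (Fin.castLE hm)) *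
        ((1 : Matrix (Fin m) (Fin m) F) -
          (supd n (fun α => ((ε α : F)) * c α)).submatrix (Fin.castLE hm) (Fin.castLE hm))⁻¹) := by
  set f1 : ℕ → F := fun α => (1 - (ε α : F)) * c α with hf1
  set f2 : ℕ → F := fun α => ((ε α : F)) * c α with hf2
  have btM : BlockTriangular ((1 + supd n f1) * (1 - supd n f2)⁻¹) (id : Fin n → Fin n) :=
    (bt_one_add f1).mul (bt_inv_one_sub f2)
  have hMblk : ((1 + supd n f1) * (1 - supd n f2)⁻¹).submatrix
        (Fin.castLE hm) (Fin.castLE hm) =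
      ((1 : Matrix (Fin m) (Fin m) F) +
          (supd n f1).submatrix (Fin.castLE hm) (Fin.castLE hm)) *
        ((1 : Matrix (Fin m) (Fin m) F) -
          (supd n f2).submatrix (Fin.castLE hm) (Fin.castLE hm))⁻¹ := by
    rw [blk_mul hm _ _ (bt_inv_one_sub f2), blk_inv hm f2]
    congr 1
    · ext i j
      simp [Matrix.submatrix_apply, Matrix.add_apply, Matrix.one_apply, Fin.castLE_inj]
    · congr 1
      ext i j
      simp [Matrix.submatrix_apply, Matrix.sub_apply, Matrix.one_apply, Fin.castLE_inj]
  rw [symX_eq, Matrix.mul_assoc]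
  rw [blk_mul hm _ _ ((blockTriangular_diagonal _).mul btM)]
  rw [blk_mul hm _ _ btM]
  rw [← Matrix.transpose_submatrix, hMblk]
  rw [Matrix.submatrix_diagonal _ _ (Fin.castLE_injective hm)]
  rw [← Matrix.mul_assoc]
  rfl


end helpers

/-- the symmetric factorized matrix is symmetric, its determinant is
`d₁⋯d_n`, and its upper-left `m×m` principal minor depends only on `d₁,…,d_m` and
`c₁,…,c_{m−1}`. -/
theorem symmetric_factorized_basic {F : Type*} [Field F] {n : ℕ}
    (c d : ℕ → F) (ε : ℕ → ℕ) (hε : ∀ α, ε α = 0 ∨ ε α = 1) :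
    (symX n c d ε)ᵀ = symX n c d ε ∧
    Matrix.det (symX n c d ε) = ∏ i ∈ Finset.Icc 1 n, d i ∧
    ∀ m : ℕ, ∀ hm : m ≤ n, ∀ c' d' : ℕ → F,
      (∀ i, 1 ≤ i → i ≤ m → d' i = d i) →
      (∀ i, 1 ≤ i → i + 1 ≤ m → c' i = c i) →
      Matrix.det ((symX n c d ε).submatrix (Fin.castLE hm) (Fin.castLE hm)) =
        Matrix.det ((symX n c' d' ε).submatrix (Fin.castLE hm) (Fin.castLE hm)) := by
  refine ⟨?_, ?_, ?_⟩
  · rw [symX_eq]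
    simp only [transpose_mul, transpose_transpose, diagonal_transpose, Matrix.mul_assoc]
  · rw [symX_eq]
    simp only [Matrix.det_mul, Matrix.det_transpose, det_one_add, det_inv_one_sub,
      Matrix.det_diagonal, one_mul, mul_one]
    rw [Fin.prod_univ_eq_prod_range (fun i => d (i + 1)) n]
    rw [show Finset.Icc 1 n = Finset.Ico 1 (n + 1) from (Finset.Ico_add_one_right_eq_Icc (a := 1) (b := n)).symm,
      Finset.prod_Ico_eq_prod_range]
    simp only [Nat.add_sub_cancel, one_mul, mul_one]
    exact Finset.prod_congr rfl fun i _ => by rw [Nat.add_comm]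
  · intro m hm c' d' hd hc
    have key : (symX n c d ε).submatrix (Fin.castLE hm) (Fin.castLE hm) =
        (symX n c' d' ε).submatrix (Fin.castLE hm) (Fin.castLE hm) := by
      rw [blk_symX hm c d ε, blk_symX hm c' d' ε]
      rw [blk_supd_congr hm (fun α => (1 - (ε α : F)) * c α)
        (fun α => (1 - (ε α : F)) * c' α) (fun α h1 h2 => by rw [hc α h1 h2])]
      rw [blk_supd_congr hm (fun α => ((ε α : F)) * c α)
        (fun α => ((ε α : F)) * c' α) (fun α h1 h2 => by rw [hc α h1 h2])]
      congr 1
      · congr 1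
        exact congrArg _ (funext fun i => (hd ((i : ℕ) + 1) (by omega) (by omega)).symm)
    rw [key]
end
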